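/- Let Z_1,...,Z_n be independent random variables, and for each 'petal' P ⊆ [n] let Q_P be a function of Z_P with |Q_P| ≤ 1. Suppose P and P' are drawn independently from a distribution over subsets of [n] such that for every fixed j ∈ [n], P(j ∈ P) ≤ ρ. Then E_{P,P'}[ Cov_Z(Q_P(Z), Q_{P'}(Z)) ] ≤ √ρ. -/

import Mathlib

open Finset

/-- Product weight of a point of the product space (the `Z_i` are independent). -/
noncomputable def fullW {n : ℕ} {α : Fin n → Type*} [∀ i, Fintype (α i)]
    (w : ∀ i, α i → ℝ) (z : ∀ i, α i) : ℝ :=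
  ∏ i, w i (z i)

namespace Camellia

/-! ### Generic alternating-sum lemmas over powersets -/

lemma alt_zero {γ : Type*} [DecidableEq γ] (S : Finset γ) (j : γ) (hj : j ∈ S)
    (c : Finset γ → ℝ) (hc : ∀ T, c (insert j T) = c T) :
    ∑ T ∈ S.powerset, (-1 : ℝ) ^ T.card * c T = 0 := by
  obtain ⟨S', hj', rfl⟩ : ∃ S', j ∉ S' ∧ insert j S' = S :=
    ⟨S.erase j, notMem_erase _ _, insert_erase hj⟩
  rw [Finset.sum_powerset_insert hj']
  have h : ∀ T ∈ S'.powerset,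
      (-1 : ℝ) ^ (insert j T).card * c (insert j T) = -((-1 : ℝ) ^ T.card * c T) := by
    intro T hT
    have hjT : j ∉ T := fun h => hj' (mem_powerset.1 hT h)
    rw [card_insert_of_notMem hjT, hc, pow_succ]
    ring
  rw [Finset.sum_congr rfl h, Finset.sum_neg_distrib]
  ring

lemma alt_sum_id {γ : Type*} [DecidableEq γ] (U : Finset γ) (c : Finset γ → ℝ) :
    ∑ S ∈ U.powerset, ∑ T ∈ S.powerset, (-1 : ℝ) ^ (S.card + T.card) * c T = c U := by
  induction U using Finset.induction_on generalizing c with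
  | empty => simp
  | @insert j U hj ih =>
    rw [Finset.sum_powerset_insert hj]
    have h2 : ∀ S ∈ U.powerset,
        ∑ T ∈ (insert j S).powerset, (-1 : ℝ) ^ ((insert j S).card + T.card) * c T
        = -(∑ T ∈ S.powerset, (-1 : ℝ) ^ (S.card + T.card) * c T)
          + ∑ T ∈ S.powerset, (-1 : ℝ) ^ (S.card + T.card) * c (insert j T) := by
      intro S hS
      have hjS : j ∉ S := fun h => hj (mem_powerset.1 hS h)
      rw [Finset.sum_powerset_insert hjS, card_insert_of_notMem hjS]
      congr 1
      · rw [← Finset.sum_neg_distrib]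
        apply Finset.sum_congr rfl; intro T _
        rw [show S.card + 1 + T.card = (S.card + T.card) + 1 by ring, pow_succ]
        ring
      · apply Finset.sum_congr rfl; intro T hT
        have hjT : j ∉ T := fun h => hjS (mem_powerset.1 hT h)
        rw [card_insert_of_notMem hjT,
          show S.card + 1 + (T.card + 1) = (S.card + T.card) + 2 by ring, pow_add]
        norm_num
    rw [Finset.sum_congr rfl h2, Finset.sum_add_distrib, Finset.sum_neg_distrib, ih c,
      ih (fun T => c (insert j T))]
    ring

end Camellia

section Main

variable {n : ℕ} {α : Fin n → Type*} [∀ i, Fintype (α i)]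

open Classical

/-- merge: take coordinates in `S` from `z`, the rest from `y`. -/
noncomputable def merge (S : Finset (Fin n)) (z y : ∀ i, α i) : ∀ i, α i :=
  fun i => if i ∈ S then z i else y i

noncomputable def Exp (w : ∀ i, α i → ℝ) (f : (∀ i, α i) → ℝ) : ℝ :=
  ∑ z, fullW w z * f z

noncomputable def inn (w : ∀ i, α i → ℝ) (f g : (∀ i, α i) → ℝ) : ℝ :=
  ∑ z, fullW w z * (f z * g z)

noncomputable def condE (w : ∀ i, α i → ℝ) (S : Finset (Fin n)) (f : (∀ i, α i) → ℝ) :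
    (∀ i, α i) → ℝ :=
  fun z => ∑ y, fullW w y * f (merge S z y)

noncomputable def ES (w : ∀ i, α i → ℝ) (S : Finset (Fin n)) (f : (∀ i, α i) → ℝ) :
    (∀ i, α i) → ℝ :=
  fun z => ∑ T ∈ S.powerset, (-1 : ℝ) ^ (S.card + T.card) * condE w T f z

variable (w : ∀ i, α i → ℝ)

lemma fullW_nonneg (hw : ∀ i a, 0 ≤ w i a) (z : ∀ i, α i) : 0 ≤ fullW w z :=
  Finset.prod_nonneg fun i _ => hw i (z i)

lemma sum_fullW (hw1 : ∀ i, ∑ a, w i a = 1) : ∑ z, fullW w z = 1 := by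
  unfold fullW
  rw [← Fintype.prod_sum]
  simp [hw1]

lemma merge_merge_self (S : Finset (Fin n)) (z y : ∀ i, α i) :
    merge S (merge S z y) (merge S y z) = z := by
  funext i; by_cases h : i ∈ S <;> simp [merge, h]

lemma fullW_merge_mul (S : Finset (Fin n)) (z y : ∀ i, α i) :
    fullW w (merge S z y) * fullW w (merge S y z) = fullW w z * fullW w y := by
  unfold fullW
  rw [← Finset.prod_mul_distrib, ← Finset.prod_mul_distrib]
  apply Finset.prod_congr rfl
  intro i _
  by_cases h : i ∈ S <;> simp [merge, h, mul_comm]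

/-- Core resampling identity. -/
lemma sum_merge (S : Finset (Fin n)) (F : (∀ i, α i) → (∀ i, α i) → ℝ) :
    ∑ z, ∑ y, fullW w z * fullW w y * F (merge S z y) (merge S y z)
      = ∑ z, ∑ y, fullW w z * fullW w y * F z y := by
  rw [← Fintype.sum_prod_type', ← Fintype.sum_prod_type']
  have hb : Function.Bijective
      (fun p : (∀ i, α i) × (∀ i, α i) => (merge S p.1 p.2, merge S p.2 p.1)) := by
    have : Function.Involutive
        (fun p : (∀ i, α i) × (∀ i, α i) => (merge S p.1 p.2, merge S p.2 p.1)) := by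
      intro p
      simp only
      rw [merge_merge_self S p.1 p.2, merge_merge_self S p.2 p.1]
    exact this.bijective
  refine Fintype.sum_bijective _ hb _ _ ?_
  intro p
  simp only
  rw [← fullW_merge_mul w S p.1 p.2]

lemma merge_univ (z y : ∀ i, α i) : merge (univ : Finset (Fin n)) z y = z := by
  funext i; simp [merge]

lemma merge_empty (z y : ∀ i, α i) : merge (∅ : Finset (Fin n)) z y = y := by
  funext i; simp [merge]

lemma condE_univ (hw1 : ∀ i, ∑ a, w i a = 1) (f : (∀ i, α i) → ℝ) :
    condE w (univ : Finset (Fin n)) f = f := by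
  funext z
  simp only [condE, merge_univ]
  rw [← Finset.sum_mul, sum_fullW w hw1, one_mul]

lemma condE_empty (f : (∀ i, α i) → ℝ) (z : ∀ i, α i) :
    condE w (∅ : Finset (Fin n)) f z = Exp w f := by
  simp only [condE, merge_empty, Exp]

lemma merge_assoc (S T : Finset (Fin n)) (z y u : ∀ i, α i) :
    merge T (merge S z y) u = merge (S ∩ T) z (merge T y u) := by
  funext i
  by_cases hT : i ∈ T <;> by_cases hS : i ∈ S <;> simp [merge, hT, hS]

lemma condE_condE (hw1 : ∀ i, ∑ a, w i a = 1) (S T : Finset (Fin n)) (f : (∀ i, α i) → ℝ) :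
    condE w S (condE w T f) = condE w (S ∩ T) f := by
  funext z
  have : condE w S (condE w T f) z
      = ∑ y, ∑ u, fullW w y * fullW w u * f (merge (S ∩ T) z (merge T y u)) := by
    simp only [condE, Finset.mul_sum]
    apply Finset.sum_congr rfl; intro y _
    apply Finset.sum_congr rfl; intro u _
    rw [merge_assoc, mul_assoc]
  rw [this, sum_merge w T (fun a _ => f (merge (S ∩ T) z a))]
  simp only [condE]
  apply Finset.sum_congr rfl; intro y _
  rw [show (∑ u : (∀ i, α i), fullW w y * fullW w u * f (merge (S ∩ T) z y))
      = (∑ u : (∀ i, α i), fullW w u) * (fullW w y * f (merge (S ∩ T) z y)) by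
    rw [Finset.sum_mul]; apply Finset.sum_congr rfl; intro u _; ring]
  rw [sum_fullW w hw1, one_mul]

lemma merge_merge_left (S : Finset (Fin n)) (z y u : ∀ i, α i) :
    merge S (merge S z y) u = merge S z u := by
  funext i; by_cases h : i ∈ S <;> simp [merge, h]

lemma condE_meas (S : Finset (Fin n)) (f : (∀ i, α i) → ℝ) (z y : ∀ i, α i) :
    condE w S f (merge S z y) = condE w S f z := by
  simp only [condE]
  apply Finset.sum_congr rfl; intro u _
  rw [merge_merge_left]

lemma inn_comm (f g : (∀ i, α i) → ℝ) : inn w f g = inn w g f := by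
  simp only [inn, mul_comm]

/-- Pull-out: if `v` depends only on coordinates in `S`, then `⟨u, v⟩ = ⟨E_S u, v⟩`. -/
lemma inn_pull (hw1 : ∀ i, ∑ a, w i a = 1) (S : Finset (Fin n)) (u v : (∀ i, α i) → ℝ)
    (hv : ∀ z y, v (merge S z y) = v z) :
    inn w u v = inn w (condE w S u) v := by
  have : inn w (condE w S u) v
      = ∑ z, ∑ y, fullW w z * fullW w y * (u (merge S z y) * v (merge S z y)) := by
    simp only [inn, condE, Finset.sum_mul, Finset.mul_sum]
    apply Finset.sum_congr rfl; intro z _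
    apply Finset.sum_congr rfl; intro y _
    rw [hv z y]
    ring
  rw [this, sum_merge w S (fun a _ => u a * v a)]
  simp only [inn]
  rw [Finset.sum_comm]
  rw [show ∑ y, ∑ z, fullW w z * fullW w y * (u z * v z)
      = ∑ y, fullW w y * ∑ z, fullW w z * (u z * v z) by
    apply Finset.sum_congr rfl; intro y _; rw [Finset.mul_sum]; apply Finset.sum_congr rfl
    intro z _; ring]
  rw [← Finset.sum_mul, sum_fullW w hw1, one_mul]

lemma condE_of_dep (P : Finset (Fin n)) (f : (∀ i, α i) → ℝ)
    (hf : ∀ z z', (∀ i ∈ P, z i = z' i) → f z = f z') (T : Finset (Fin n)) :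
    condE w T f = condE w (T ∩ P) f := by
  funext z
  apply Finset.sum_congr rfl; intro y _
  congr 1
  apply hf
  intro i hiP
  by_cases h : i ∈ T <;> simp [merge, h, hiP]

lemma inn_condE_condE (hw1 : ∀ i, ∑ a, w i a = 1) (A B : Finset (Fin n))
    (f g : (∀ i, α i) → ℝ) :
    inn w (condE w A f) (condE w B g) = inn w (condE w (A ∩ B) f) (condE w (A ∩ B) g) := by
  have h1 : inn w (condE w A f) (condE w B g)
      = inn w (condE w (B ∩ A) f) (condE w B g) := by
    rw [inn_pull w hw1 B (condE w A f) (condE w B g) (condE_meas w B g), condE_condE w hw1]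
  have h2 : inn w (condE w (B ∩ A) f) (condE w B g)
      = inn w (condE w (B ∩ A) f) (condE w (B ∩ A) g) := by
    rw [inn_comm, inn_pull w hw1 (B ∩ A) (condE w B g) (condE w (B ∩ A) f)
      (condE_meas w (B ∩ A) f), condE_condE w hw1, inn_comm]
    congr 2
    rw [Finset.inter_comm B A, Finset.inter_assoc, Finset.inter_self, Finset.inter_comm]
  rw [h1, h2, Finset.inter_comm B A]

lemma inn_sum_left {β : Type*} (s : Finset β) (F : β → (∀ i, α i) → ℝ) (g : (∀ i, α i) → ℝ) :
    inn w (fun z => ∑ b ∈ s, F b z) g = ∑ b ∈ s, inn w (F b) g := by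
  simp only [inn, Finset.sum_mul, Finset.mul_sum]
  rw [Finset.sum_comm]

lemma inn_smul_left (c : ℝ) (f g : (∀ i, α i) → ℝ) :
    inn w (fun z => c * f z) g = c * inn w f g := by
  simp only [inn, Finset.mul_sum]
  apply Finset.sum_congr rfl; intro z _; ring

lemma inn_ES_expand (S T : Finset (Fin n)) (f g : (∀ i, α i) → ℝ) :
    inn w (ES w S f) (ES w T g)
      = ∑ A ∈ S.powerset, ∑ B ∈ T.powerset,
          ((-1 : ℝ) ^ (S.card + A.card) * (-1 : ℝ) ^ (T.card + B.card))
            * inn w (condE w A f) (condE w B g) := by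
  rw [show ES w S f = fun z => ∑ A ∈ S.powerset, (-1:ℝ)^(S.card + A.card) * condE w A f z from rfl,
    inn_sum_left]
  apply Finset.sum_congr rfl; intro A _
  rw [inn_smul_left]
  rw [inn_comm]
  rw [show ES w T g = fun z => ∑ B ∈ T.powerset, (-1:ℝ)^(T.card + B.card) * condE w B g z from rfl,
    inn_sum_left, Finset.mul_sum]
  apply Finset.sum_congr rfl; intro B _
  rw [inn_smul_left, inn_comm]
  ring

lemma inn_ES_ES_of_mem_sdiff (hw1 : ∀ i, ∑ a, w i a = 1) (S T : Finset (Fin n))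
    (j : Fin n) (hjS : j ∈ S) (hjT : j ∉ T) (f g : (∀ i, α i) → ℝ) :
    inn w (ES w S f) (ES w T g) = 0 := by
  rw [inn_ES_expand]
  have : ∀ A ∈ S.powerset, ∑ B ∈ T.powerset,
      ((-1 : ℝ) ^ (S.card + A.card) * (-1 : ℝ) ^ (T.card + B.card))
        * inn w (condE w A f) (condE w B g)
      = (-1 : ℝ) ^ A.card *
        ((-1:ℝ)^S.card * ∑ B ∈ T.powerset, (-1 : ℝ) ^ (T.card + B.card)
          * inn w (condE w (A ∩ B) f) (condE w (A ∩ B) g)) := by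
    intro A _
    rw [Finset.mul_sum, Finset.mul_sum]
    apply Finset.sum_congr rfl; intro B _
    rw [inn_condE_condE w hw1, pow_add]
    ring
  rw [Finset.sum_congr rfl this]
  apply Camellia.alt_zero S j hjS
  intro A
  have hAB : ∀ B ∈ T.powerset, (-1:ℝ)^(T.card + B.card)
        * inn w (condE w (insert j A ∩ B) f) (condE w (insert j A ∩ B) g)
      = (-1:ℝ)^(T.card + B.card) * inn w (condE w (A ∩ B) f) (condE w (A ∩ B) g) := by
    intro B hB
    have hjB : j ∉ B := fun h => hjT (mem_powerset.1 hB h)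
    rw [Finset.insert_inter_of_notMem hjB]
  rw [Finset.sum_congr rfl hAB]

lemma inn_ES_ES_of_ne (hw1 : ∀ i, ∑ a, w i a = 1) (S T : Finset (Fin n)) (hST : S ≠ T)
    (f g : (∀ i, α i) → ℝ) :
    inn w (ES w S f) (ES w T g) = 0 := by
  by_cases h : S ⊆ T
  · have : ¬ T ⊆ S := fun h' => hST (Finset.Subset.antisymm h h')
    obtain ⟨j, hjT, hjS⟩ := Finset.not_subset.1 this
    rw [inn_comm]
    exact inn_ES_ES_of_mem_sdiff w hw1 T S j hjT hjS g f
  · obtain ⟨j, hjS, hjT⟩ := Finset.not_subset.1 h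
    exact inn_ES_ES_of_mem_sdiff w hw1 S T j hjS hjT f g

lemma ES_decomp (hw1 : ∀ i, ∑ a, w i a = 1) (f : (∀ i, α i) → ℝ) (z : ∀ i, α i) :
    ∑ S : Finset (Fin n), ES w S f z = f z := by
  simp only [ES]
  rw [← Finset.powerset_univ]
  rw [Camellia.alt_sum_id (univ : Finset (Fin n)) (fun T => condE w T f z)]
  rw [condE_univ w hw1]

lemma ES_eq_zero (P S : Finset (Fin n)) (hSP : ¬ S ⊆ P) (f : (∀ i, α i) → ℝ)
    (hf : ∀ z z', (∀ i ∈ P, z i = z' i) → f z = f z') :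
    ES w S f = 0 := by
  obtain ⟨j, hjS, hjP⟩ := Finset.not_subset.1 hSP
  funext z
  show (∑ T ∈ S.powerset, (-1 : ℝ) ^ (S.card + T.card) * condE w T f z) = 0
  have : ∀ T ∈ S.powerset, (-1 : ℝ) ^ (S.card + T.card) * condE w T f z
      = (-1 : ℝ) ^ T.card * ((-1:ℝ)^S.card * condE w T f z) := by
    intro T _; rw [pow_add]; ring
  rw [Finset.sum_congr rfl this]
  apply Camellia.alt_zero S j hjS
  intro T
  congr 1
  rw [condE_of_dep w P f hf (insert j T), condE_of_dep w P f hf T,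
    Finset.insert_inter_of_notMem hjP]

lemma inn_eq_sum_ES (hw1 : ∀ i, ∑ a, w i a = 1) (f g : (∀ i, α i) → ℝ) :
    inn w f g = ∑ S : Finset (Fin n), inn w (ES w S f) (ES w S g) := by
  have h1 : inn w f g = inn w (fun z => ∑ S : Finset (Fin n), ES w S f z) g := by
    congr 1; funext z; rw [ES_decomp w hw1]
  rw [h1, inn_sum_left]
  apply Finset.sum_congr rfl; intro S _
  have h2 : inn w (ES w S f) g = inn w (ES w S f) (fun z => ∑ T : Finset (Fin n), ES w T g z) := by
    congr 1; funext z; rw [ES_decomp w hw1]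
  rw [h2, inn_comm, inn_sum_left]
  rw [Finset.sum_eq_single S (fun T _ hT => by
    rw [inn_comm]; exact inn_ES_ES_of_ne w hw1 S T (fun h => hT h.symm) f g)
    (fun h => absurd (mem_univ S) h)]
  rw [inn_comm]

lemma ES_empty (f : (∀ i, α i) → ℝ) (z : ∀ i, α i) :
    ES w (∅ : Finset (Fin n)) f z = Exp w f := by
  simp only [ES, Finset.powerset_empty, Finset.sum_singleton, Finset.card_empty]
  rw [condE_empty]
  norm_num

lemma inn_ES_empty (hw1 : ∀ i, ∑ a, w i a = 1) (f g : (∀ i, α i) → ℝ) :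
    inn w (ES w (∅ : Finset (Fin n)) f) (ES w (∅ : Finset (Fin n)) g) = Exp w f * Exp w g := by
  have : inn w (ES w (∅ : Finset (Fin n)) f) (ES w (∅ : Finset (Fin n)) g)
      = ∑ z, fullW w z * (Exp w f * Exp w g) := by
    apply Finset.sum_congr rfl; intro z _
    rw [ES_empty, ES_empty]
  rw [this, ← Finset.sum_mul, sum_fullW w hw1, one_mul]

lemma cov_eq_sum_ES (hw1 : ∀ i, ∑ a, w i a = 1) (f g : (∀ i, α i) → ℝ) :
    inn w f g - Exp w f * Exp w g
      = ∑ S ∈ (univ : Finset (Finset (Fin n))).erase ∅, inn w (ES w S f) (ES w S g) := by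
  rw [inn_eq_sum_ES w hw1 f g,
    ← Finset.add_sum_erase (univ : Finset (Finset (Fin n)))
      (fun S => inn w (ES w S f) (ES w S g)) (mem_univ ∅),
    inn_ES_empty w hw1]
  ring

lemma inn_self_nonneg (hw : ∀ i a, 0 ≤ w i a) (f : (∀ i, α i) → ℝ) : 0 ≤ inn w f f :=
  Finset.sum_nonneg fun z _ => mul_nonneg (fullW_nonneg w hw z) (mul_self_nonneg _)

lemma inn_le_sqrt (hw : ∀ i a, 0 ≤ w i a) (f g : (∀ i, α i) → ℝ) :
    inn w f g ≤ Real.sqrt (inn w f f) * Real.sqrt (inn w g g) := by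
  have h1 : inn w f g = ∑ z, (Real.sqrt (fullW w z) * f z) * (Real.sqrt (fullW w z) * g z) := by
    apply Finset.sum_congr rfl; intro z _
    rw [show (Real.sqrt (fullW w z) * f z) * (Real.sqrt (fullW w z) * g z)
        = (Real.sqrt (fullW w z) * Real.sqrt (fullW w z)) * (f z * g z) by ring,
      Real.mul_self_sqrt (fullW_nonneg w hw z)]
  have h2 : ∀ (u : (∀ i, α i) → ℝ), ∑ z, (Real.sqrt (fullW w z) * u z) ^ 2 = inn w u u := by
    intro u
    apply Finset.sum_congr rfl; intro z _
    rw [mul_pow, Real.sq_sqrt (fullW_nonneg w hw z)]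
    ring
  rw [h1]
  calc ∑ z, (Real.sqrt (fullW w z) * f z) * (Real.sqrt (fullW w z) * g z)
      ≤ Real.sqrt (∑ z, (Real.sqrt (fullW w z) * f z) ^ 2)
        * Real.sqrt (∑ z, (Real.sqrt (fullW w z) * g z) ^ 2) :=
        Real.sum_mul_le_sqrt_mul_sqrt _ _ _
    _ = Real.sqrt (inn w f f) * Real.sqrt (inn w g g) := by rw [h2 f, h2 g]

lemma inn_self_le_one (hw : ∀ i a, 0 ≤ w i a) (hw1 : ∀ i, ∑ a, w i a = 1)
    (f : (∀ i, α i) → ℝ) (hf : ∀ z, |f z| ≤ 1) : inn w f f ≤ 1 := by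
  have : inn w f f ≤ ∑ z, fullW w z * 1 := by
    apply Finset.sum_le_sum; intro z _
    apply mul_le_mul_of_nonneg_left _ (fullW_nonneg w hw z)
    calc f z * f z = |f z| * |f z| := (abs_mul_abs_self _).symm
      _ ≤ 1 * 1 := by
          apply mul_le_mul (hf z) (hf z) (abs_nonneg _) zero_le_one
      _ = 1 := one_mul 1
  calc inn w f f ≤ ∑ z, fullW w z * 1 := this
    _ = 1 := by rw [← Finset.sum_mul, sum_fullW w hw1, one_mul]

lemma cov_le_one (hw : ∀ i a, 0 ≤ w i a) (hw1 : ∀ i, ∑ a, w i a = 1)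
    (f g : (∀ i, α i) → ℝ) (hf : ∀ z, |f z| ≤ 1) (hg : ∀ z, |g z| ≤ 1) :
    inn w f g - Exp w f * Exp w g ≤ 1 := by
  have key : ∀ (u v : (∀ i, α i) → ℝ),
      inn w (fun z => u z - Exp w u) (fun z => v z - Exp w v)
        = inn w u v - Exp w u * Exp w v := by
    intro u v
    have expand : inn w (fun z => u z - Exp w u) (fun z => v z - Exp w v)
        = ∑ z, (fullW w z * (u z * v z) - (Exp w v) * (fullW w z * u z)
            - (Exp w u) * (fullW w z * v z) + (Exp w u * Exp w v) * fullW w z) := by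
      simp only [inn]
      apply Finset.sum_congr rfl; intro z _; ring
    rw [expand, Finset.sum_add_distrib, Finset.sum_sub_distrib, Finset.sum_sub_distrib,
      ← Finset.mul_sum, ← Finset.mul_sum, ← Finset.mul_sum, sum_fullW w hw1]
    simp only [inn, Exp]
    ring
  rw [← key f g]
  calc inn w (fun z => f z - Exp w f) (fun z => g z - Exp w g)
      ≤ Real.sqrt (inn w (fun z => f z - Exp w f) (fun z => f z - Exp w f))
        * Real.sqrt (inn w (fun z => g z - Exp w g) (fun z => g z - Exp w g)) :=
        inn_le_sqrt w hw _ _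
    _ ≤ 1 * 1 := by
        apply mul_le_mul _ _ (Real.sqrt_nonneg _) zero_le_one
        · rw [show (1:ℝ) = Real.sqrt 1 by rw [Real.sqrt_one]]
          apply Real.sqrt_le_sqrt
          rw [key f f]
          have := inn_self_le_one w hw hw1 f hf
          nlinarith [sq_nonneg (Exp w f)]
        · rw [show (1:ℝ) = Real.sqrt 1 by rw [Real.sqrt_one]]
          apply Real.sqrt_le_sqrt
          rw [key g g]
          have := inn_self_le_one w hw hw1 g hg
          nlinarith [sq_nonneg (Exp w g)]
    _ = 1 := one_mul 1

end Main

open Classical in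
/-- Camellia covariance bound: if the petals `P, P'` are drawn i.i.d. from a distribution `π`
with `P(j ∈ P) ≤ ρ` for every coordinate `j`, and each `Q_P` is a `[-1,1]`-valued function of
`Z_P` where the `Z_i` are independent, then the expected covariance
`E_{P,P'}[Cov_Z(Q_P(Z), Q_{P'}(Z))]` is at most `√ρ`. -/
theorem stmt6 {n : ℕ} {α : Fin n → Type*} [∀ i, Fintype (α i)]
    (w : ∀ i, α i → ℝ) (hw : ∀ i a, 0 ≤ w i a) (hw1 : ∀ i, ∑ a, w i a = 1)
    (π : Finset (Fin n) → ℝ) (hπ : ∀ P, 0 ≤ π P) (hπ1 : ∑ P : Finset (Fin n), π P = 1)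
    (Q : Finset (Fin n) → (∀ i, α i) → ℝ)
    (hdep : ∀ P z z', (∀ i ∈ P, z i = z' i) → Q P z = Q P z')
    (hbd : ∀ P z, |Q P z| ≤ 1)
    (ρ : ℝ) (hρ : ∀ j : Fin n, ∑ P : Finset (Fin n), (if j ∈ P then π P else 0) ≤ ρ) :
    ∑ P : Finset (Fin n), ∑ P' : Finset (Fin n), π P * π P' *
      ((∑ z, fullW w z * (Q P z * Q P' z))
        - (∑ z, fullW w z * Q P z) * (∑ z, fullW w z * Q P' z))
      ≤ Real.sqrt ρ := by
  show ∑ P : Finset (Fin n), ∑ P' : Finset (Fin n), π P * π P' *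
      (inn w (Q P) (Q P') - Exp w (Q P) * Exp w (Q P')) ≤ Real.sqrt ρ
  by_cases hρ0 : ρ < 0
  · -- `ρ < 0` forces `n = 0`; then every covariance vanishes.
    haveI hempty : IsEmpty (Fin n) := by
      constructor; intro j
      have h1 : (0:ℝ) ≤ ∑ P : Finset (Fin n), (if j ∈ P then π P else 0) := by
        apply Finset.sum_nonneg
        intro P _
        split
        · exact hπ P
        · exact le_refl 0
      linarith [hρ j]
    have hz : ∀ P P' : Finset (Fin n),
        inn w (Q P) (Q P') - Exp w (Q P) * Exp w (Q P') = 0 := by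
      intro P P'
      haveI : Unique (∀ i, α i) :=
        ⟨⟨fun i => (hempty.elim i)⟩, fun z => funext fun i => hempty.elim i⟩
      have hfW : ∀ z : ∀ i, α i, fullW w z = 1 := by
        intro z; simp [fullW, Finset.univ_eq_empty]
      simp only [inn, Exp, Finset.univ_unique, Finset.sum_singleton, hfW, one_mul]
      ring
    simp only [hz, mul_zero, Finset.sum_const_zero]
    exact Real.sqrt_nonneg ρ
  · push_neg at hρ0
    rcases le_or_gt 1 ρ with h1ρ | h1ρ
    · -- `ρ ≥ 1`: each covariance is at most `1`.
      calc ∑ P : Finset (Fin n), ∑ P' : Finset (Fin n), π P * π P' *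
            (inn w (Q P) (Q P') - Exp w (Q P) * Exp w (Q P'))
          ≤ ∑ P : Finset (Fin n), ∑ P' : Finset (Fin n), π P * π P' * 1 := by
            apply Finset.sum_le_sum; intro P _
            apply Finset.sum_le_sum; intro P' _
            exact mul_le_mul_of_nonneg_left
              (cov_le_one w hw hw1 _ _ (hbd P) (hbd P')) (mul_nonneg (hπ P) (hπ P'))
        _ = 1 := by
            simp only [mul_one]
            rw [← Finset.sum_mul_sum, hπ1, one_mul]
        _ ≤ Real.sqrt ρ := by
            rw [show (1:ℝ) = Real.sqrt 1 by simp]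
            exact Real.sqrt_le_sqrt h1ρ
    · -- main case `0 ≤ ρ < 1`
      set E := (univ : Finset (Finset (Fin n))).erase ∅ with hE
      set N : Finset (Fin n) → Finset (Fin n) → ℝ :=
        fun S P => inn w (ES w S (Q P)) (ES w S (Q P)) with hN
      have hN0 : ∀ S P, 0 ≤ N S P := fun S P => inn_self_nonneg w hw _
      have step1 : ∑ P : Finset (Fin n), ∑ P' : Finset (Fin n), π P * π P' *
            (inn w (Q P) (Q P') - Exp w (Q P) * Exp w (Q P'))
          = ∑ S ∈ E, ∑ P : Finset (Fin n), ∑ P' : Finset (Fin n),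
              π P * π P' * inn w (ES w S (Q P)) (ES w S (Q P')) := by
        have h1 : ∀ P P' : Finset (Fin n), π P * π P' *
              (inn w (Q P) (Q P') - Exp w (Q P) * Exp w (Q P'))
            = ∑ S ∈ E, π P * π P' * inn w (ES w S (Q P)) (ES w S (Q P')) := by
          intro P P'
          rw [cov_eq_sum_ES w hw1, Finset.mul_sum]
        calc ∑ P : Finset (Fin n), ∑ P' : Finset (Fin n), π P * π P' *
              (inn w (Q P) (Q P') - Exp w (Q P) * Exp w (Q P'))
            = ∑ P : Finset (Fin n), ∑ P' : Finset (Fin n), ∑ S ∈ E,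
                π P * π P' * inn w (ES w S (Q P)) (ES w S (Q P')) := by
              apply Finset.sum_congr rfl; intro P _
              apply Finset.sum_congr rfl; intro P' _
              exact h1 P P'
          _ = ∑ P : Finset (Fin n), ∑ S ∈ E, ∑ P' : Finset (Fin n),
                π P * π P' * inn w (ES w S (Q P)) (ES w S (Q P')) := by
              apply Finset.sum_congr rfl; intro P _
              exact Finset.sum_comm
          _ = ∑ S ∈ E, ∑ P : Finset (Fin n), ∑ P' : Finset (Fin n),
                π P * π P' * inn w (ES w S (Q P)) (ES w S (Q P')) := Finset.sum_comm
      have key : ∀ S ∈ E, ∑ P : Finset (Fin n), ∑ P' : Finset (Fin n),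
            π P * π P' * inn w (ES w S (Q P)) (ES w S (Q P'))
          ≤ ρ * ∑ P : Finset (Fin n), π P * N S P := by
        intro S hS
        have hSne : S ≠ ∅ := (Finset.mem_erase.1 hS).1
        obtain ⟨j, hj⟩ := Finset.nonempty_iff_ne_empty.2 hSne
        set a : Finset (Fin n) → ℝ := fun P => if S ⊆ P then Real.sqrt (N S P) else 0 with ha
        have ha0 : ∀ P, 0 ≤ a P := by
          intro P; rw [ha]; dsimp only; split
          · exact Real.sqrt_nonneg _
          · exact le_refl 0
        have hterm : ∀ P P' : Finset (Fin n),
            π P * π P' * inn w (ES w S (Q P)) (ES w S (Q P'))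
              ≤ (π P * a P) * (π P' * a P') := by
          intro P P'
          by_cases hP : S ⊆ P
          · by_cases hP' : S ⊆ P'
            · have hcs := inn_le_sqrt w hw (ES w S (Q P)) (ES w S (Q P'))
              have h2 : π P * π P' * inn w (ES w S (Q P)) (ES w S (Q P'))
                  ≤ π P * π P' * (Real.sqrt (N S P) * Real.sqrt (N S P')) :=
                mul_le_mul_of_nonneg_left hcs (mul_nonneg (hπ P) (hπ P'))
              calc π P * π P' * inn w (ES w S (Q P)) (ES w S (Q P'))
                  ≤ π P * π P' * (Real.sqrt (N S P) * Real.sqrt (N S P')) := h2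
                _ = (π P * a P) * (π P' * a P') := by
                    rw [ha]; simp only [hP, hP', if_pos]; ring
            · have hz : ES w S (Q P') = 0 := ES_eq_zero w P' S hP' (Q P') (hdep P')
              have hinn : inn w (ES w S (Q P)) (ES w S (Q P')) = 0 := by
                rw [hz]; simp [inn]
              rw [hinn, mul_zero]
              have : a P' = 0 := by rw [ha]; simp [hP']
              rw [this, mul_zero, mul_zero]
          · have hz : ES w S (Q P) = 0 := ES_eq_zero w P S hP (Q P) (hdep P)
            have hinn : inn w (ES w S (Q P)) (ES w S (Q P')) = 0 := by
              rw [hz]; simp [inn]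
            rw [hinn, mul_zero]
            have : a P = 0 := by rw [ha]; simp [hP]
            rw [this, mul_zero, zero_mul]
        have hsum : ∑ P : Finset (Fin n), ∑ P' : Finset (Fin n),
              π P * π P' * inn w (ES w S (Q P)) (ES w S (Q P'))
            ≤ (∑ P : Finset (Fin n), π P * a P) * (∑ P : Finset (Fin n), π P * a P) := by
          rw [Finset.sum_mul_sum]
          apply Finset.sum_le_sum; intro P _
          apply Finset.sum_le_sum; intro P' _
          exact hterm P P'
        have hfactor : ∀ P, π P * a P
            = (if S ⊆ P then Real.sqrt (π P) else 0) * (Real.sqrt (π P) * a P) := by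
          intro P
          by_cases hP : S ⊆ P
          · simp only [hP, if_pos]
            rw [← mul_assoc, Real.mul_self_sqrt (hπ P)]
          · have : a P = 0 := by rw [ha]; simp [hP]
            simp [hP, this]
        have hCS : (∑ P : Finset (Fin n), π P * a P) * (∑ P : Finset (Fin n), π P * a P)
            ≤ (∑ P : Finset (Fin n), (if S ⊆ P then π P else 0))
              * (∑ P : Finset (Fin n), π P * N S P) := by
          have h3 := Finset.sum_mul_sq_le_sq_mul_sq univ
            (fun P => if S ⊆ P then Real.sqrt (π P) else 0)
            (fun P => Real.sqrt (π P) * a P)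
          have h4 : ∑ P : Finset (Fin n),
              ((if S ⊆ P then Real.sqrt (π P) else 0)) ^ 2
              = ∑ P : Finset (Fin n), (if S ⊆ P then π P else 0) := by
            apply Finset.sum_congr rfl; intro P _
            by_cases hP : S ⊆ P
            · simp only [hP, if_pos]
              rw [Real.sq_sqrt (hπ P)]
            · simp [hP]
          have h5 : ∑ P : Finset (Fin n), (Real.sqrt (π P) * a P) ^ 2
              ≤ ∑ P : Finset (Fin n), π P * N S P := by
            apply Finset.sum_le_sum; intro P _
            rw [mul_pow, Real.sq_sqrt (hπ P)]
            apply mul_le_mul_of_nonneg_left _ (hπ P)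
            by_cases hP : S ⊆ P
            · rw [ha]; simp only [hP, if_pos]
              rw [Real.sq_sqrt (hN0 S P)]
            · rw [ha]; simp [hP, hN0 S P]
          calc (∑ P : Finset (Fin n), π P * a P) * (∑ P : Finset (Fin n), π P * a P)
              = (∑ P : Finset (Fin n), (if S ⊆ P then Real.sqrt (π P) else 0)
                  * (Real.sqrt (π P) * a P)) ^ 2 := by
                rw [sq]; congr 1 <;>
                  exact Finset.sum_congr rfl fun P _ => hfactor P
            _ ≤ (∑ P : Finset (Fin n), ((if S ⊆ P then Real.sqrt (π P) else 0)) ^ 2)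
                  * (∑ P : Finset (Fin n), (Real.sqrt (π P) * a P) ^ 2) := h3
            _ ≤ (∑ P : Finset (Fin n), (if S ⊆ P then π P else 0))
                  * (∑ P : Finset (Fin n), π P * N S P) := by
                rw [h4]
                apply mul_le_mul_of_nonneg_left h5
                exact Finset.sum_nonneg fun P _ => by
                  split
                  · exact hπ P
                  · exact le_refl 0
        have hρS : (∑ P : Finset (Fin n), (if S ⊆ P then π P else 0)) ≤ ρ := by
          refine le_trans (Finset.sum_le_sum fun P _ => ?_) (hρ j)
          by_cases hP : S ⊆ P
          · simp [hP, hP hj]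
          · simp only [hP, if_neg, if_false]
            split
            · exact hπ P
            · exact le_refl 0
        calc ∑ P : Finset (Fin n), ∑ P' : Finset (Fin n),
              π P * π P' * inn w (ES w S (Q P)) (ES w S (Q P'))
            ≤ (∑ P : Finset (Fin n), π P * a P) * (∑ P : Finset (Fin n), π P * a P) := hsum
          _ ≤ (∑ P : Finset (Fin n), (if S ⊆ P then π P else 0))
                * (∑ P : Finset (Fin n), π P * N S P) := hCS
          _ ≤ ρ * ∑ P : Finset (Fin n), π P * N S P := by
              apply mul_le_mul_of_nonneg_right hρS
              exact Finset.sum_nonneg fun P _ => mul_nonneg (hπ P) (hN0 S P)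
      calc ∑ P : Finset (Fin n), ∑ P' : Finset (Fin n), π P * π P' *
            (inn w (Q P) (Q P') - Exp w (Q P) * Exp w (Q P'))
          = ∑ S ∈ E, ∑ P : Finset (Fin n), ∑ P' : Finset (Fin n),
              π P * π P' * inn w (ES w S (Q P)) (ES w S (Q P')) := step1
        _ ≤ ∑ S ∈ E, ρ * ∑ P : Finset (Fin n), π P * N S P := Finset.sum_le_sum key
        _ = ρ * ∑ P : Finset (Fin n), π P * (∑ S ∈ E, N S P) := by
            rw [← Finset.mul_sum, Finset.sum_comm]
            congr 1
            apply Finset.sum_congr rfl; intro P _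
            rw [Finset.mul_sum]
        _ ≤ ρ * ∑ P : Finset (Fin n), π P * 1 := by
            apply mul_le_mul_of_nonneg_left _ hρ0
            apply Finset.sum_le_sum; intro P _
            apply mul_le_mul_of_nonneg_left _ (hπ P)
            calc ∑ S ∈ E, N S P ≤ ∑ S : Finset (Fin n), N S P :=
                Finset.sum_le_sum_of_subset_of_nonneg (Finset.erase_subset _ _)
                  (fun S _ _ => hN0 S P)
              _ = inn w (Q P) (Q P) := (inn_eq_sum_ES w hw1 _ _).symm
              _ ≤ 1 := inn_self_le_one w hw hw1 (Q P) (hbd P)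
        _ = ρ := by
            simp only [mul_one]
            rw [hπ1, mul_one]
        _ ≤ Real.sqrt ρ := (Real.le_sqrt hρ0 hρ0).2 (by nlinarith)
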